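/- Assume 0 < q < 1, α > 0 and (4q+2)/3 < p < q + 1. Then g(x(t)) − g* = O(1/t^{4q−2p+2}) as t → ∞. -/

import Mathlib

/-!
Put r := 4q − 2p + 2. The hypotheses give 0 < r ≤ 2, r ≤ q + 1, r < p and p + q < 3, and for
every such r the energy `tikhonovLyapunov` is nonincreasing for large t: along the
trajectory its derivative consists of r t^(r-1) times the convexity gap
g(x) − g* − ⟪∇g(x), x − x*⟫ ≤ 0 plus quadratic terms in x, x − x* and ẋ whose coefficients are
eventually nonpositive once the cross term ⟪x − x*, ẋ⟫ is split by Young's inequality (this is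
where q < 1 and p + q < 3 enter). As the energy dominates t^r (g(x(t)) − g*), the gap is
O(t^(-r)).
-/

open Filter Topology Set
open scoped InnerProductSpace

section
variable {H : Type*} [NormedAddCommGroup H] [InnerProductSpace ℝ H]

theorem mul_inner_le_of_pos (c : ℝ) {s : ℝ} (hs : 0 < s) (u v : H) :
    c * ⟪u, v⟫_ℝ ≤ s / 2 * ‖v‖ ^ 2 + c ^ 2 / (2 * s) * ‖u‖ ^ 2 := by
  have key : s / 2 * ‖v‖ ^ 2 + c ^ 2 / (2 * s) * ‖u‖ ^ 2 - c * ⟪u, v⟫_ℝ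
      = ‖s • v - c • u‖ ^ 2 / (2 * s) := by
    rw [norm_sub_sq_real, norm_smul, norm_smul, real_inner_smul_left, real_inner_smul_right,
      real_inner_comm, Real.norm_eq_abs, Real.norm_eq_abs, mul_pow, mul_pow, sq_abs, sq_abs]
    field_simp
    ring
  have : 0 ≤ ‖s • v - c • u‖ ^ 2 / (2 * s) := by positivity
  linarith

variable [CompleteSpace H] {g : H → ℝ} {g' : H}

theorem HasGradientAt.comp_hasDerivAt {γ : ℝ → H} {γ' : H} {t : ℝ}
    (hg : HasGradientAt g g' (γ t)) (hγ : HasDerivAt γ γ' t) :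
    HasDerivAt (g ∘ γ) ⟪g', γ'⟫_ℝ t := by
  have h := hg.hasFDerivAt.comp_hasDerivAt t hγ
  rwa [InnerProductSpace.toDual_apply_apply] at h

theorem ConvexOn.inner_le_sub_of_hasGradientAt (hg : ConvexOn ℝ univ g) {u : H}
    (hgrad : HasGradientAt g g' u) (v : H) : ⟪g', v - u⟫_ℝ ≤ g v - g u := by
  have hline : HasDerivAt (g ∘ AffineMap.lineMap u v) ⟪g', v - u⟫_ℝ (0 : ℝ) :=
    HasGradientAt.comp_hasDerivAt (by simpa using hgrad) AffineMap.hasDerivAt_lineMap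
  simpa [slope_def_field] using
    (hg.comp_affineMap (AffineMap.lineMap u v)).le_slope_of_hasDerivAt (mem_univ 0) (mem_univ 1)
      zero_lt_one hline
end

noncomputable section
variable {H : Type*} [NormedAddCommGroup H] [InnerProductSpace ℝ H]
  (g : H → ℝ) (g' : H → H) (x x' : ℝ → H) (xstar : H) (α q a p r : ℝ)

/-- The three terms in `x t - xstar` and `x' t` with coefficients `r ^ 2 / 2`, `r`, `1 / 2` add up
to `‖r t^(r/2-1) (x t - xstar) + t^(r/2) x' t‖² / 2`; the last term cancels the `‖xstar‖²`
produced by `⟪x t - xstar, x t⟫` in the derivative. -/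
def tikhonovLyapunov (t : ℝ) : ℝ :=
  t ^ r * (g (x t) - g xstar) + a / 2 * t ^ (r - p) * ‖x t‖ ^ 2
    + r ^ 2 / 2 * t ^ (r - 2) * ‖x t - xstar‖ ^ 2 + r * t ^ (r - 1) * ⟪x t - xstar, x' t⟫_ℝ
    + 1 / 2 * t ^ r * ‖x' t‖ ^ 2 + α * r / 2 * t ^ (r - q - 1) * ‖x t - xstar‖ ^ 2
    + a * r * ‖xstar‖ ^ 2 / (2 * (p - r)) * t ^ (r - p)

def tikhonovLyapunovDeriv (t : ℝ) : ℝ :=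
  r * t ^ (r - 1) * (g (x t) - g xstar - ⟪g' (x t), x t - xstar⟫_ℝ)
    - a * p / 2 * t ^ (r - p - 1) * ‖x t‖ ^ 2
    + (r ^ 2 * (r - 2) / 2 * t ^ (r - 3) - α * r * (q + 1 - r) / 2 * t ^ (r - q - 2)
      - a * r / 2 * t ^ (r - p - 1)) * ‖x t - xstar‖ ^ 2
    + r * (2 * r - 1) * t ^ (r - 2) * ⟪x t - xstar, x' t⟫_ℝ
    + (3 * r / 2 * t ^ (r - 1) - α * t ^ (r - q)) * ‖x' t‖ ^ 2

variable {g g' x x' xstar α q a p r}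

theorem hasDerivAt_tikhonovLyapunov [CompleteSpace H] {x'' : ℝ → H} {t : ℝ} (ht : 0 < t)
    (hpr : p ≠ r) (hgrad : HasGradientAt g (g' (x t)) (x t)) (hx : HasDerivAt x (x' t) t)
    (hx' : HasDerivAt x' (x'' t) t)
    (hODE : x'' t + (α / t ^ q) • x' t + g' (x t) + (a / t ^ p) • x t = 0) :
    HasDerivAt (tikhonovLyapunov g x x' xstar α q a p r)
      (tikhonovLyapunovDeriv g g' x x' xstar α q a p r t) t := by
  have hu := hx.sub_const xstar
  have hpow (e : ℝ) : HasDerivAt (fun s : ℝ => s ^ e) (e * t ^ (e - 1)) t :=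
    Real.hasDerivAt_rpow_const (Or.inl ht.ne')
  have hraw := (((((((hpow r).mul ((hgrad.comp_hasDerivAt hx).sub_const (g xstar))).add
    (((hpow (r - p)).const_mul (a / 2)).mul hx.norm_sq)).add
    (((hpow (r - 2)).const_mul (r ^ 2 / 2)).mul hu.norm_sq)).add
    (((hpow (r - 1)).const_mul r).mul (hu.inner ℝ hx'))).add
    (((hpow r).const_mul (1 / 2)).mul hx'.norm_sq)).add
    (((hpow (r - q - 1)).const_mul (α * r / 2)).mul hu.norm_sq)).add
    ((hpow (r - p)).const_mul (a * r * ‖xstar‖ ^ 2 / (2 * (p - r))))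
  refine hraw.congr_deriv ?_
  have hx'' : x'' t = -((α / t ^ q) • x' t) - g' (x t) - (a / t ^ p) • x t := by
    linear_combination (norm := module) hODE
  have hpolar : ⟪x t - xstar, x t⟫_ℝ = (‖x t - xstar‖ ^ 2 + ‖x t‖ ^ 2 - ‖xstar‖ ^ 2) / 2 := by
    rw [norm_sub_sq_real, inner_sub_left, real_inner_self_eq_norm_sq, real_inner_comm]
    ring
  simp only [tikhonovLyapunovDeriv, Function.comp_apply, hx'', inner_sub_right, inner_neg_right,
    real_inner_smul_right, hpolar, real_inner_self_eq_norm_sq, real_inner_comm (x' t),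
    real_inner_comm (x t - xstar) (g' (x t))]
  simp only [Real.rpow_sub ht, Real.rpow_one, Real.rpow_ofNat]
  have := sub_ne_zero.mpr hpr
  field_simp
  ring

theorem mul_sub_le_tikhonovLyapunov {t : ℝ} (ht : 0 < t) (hα : 0 ≤ α) (ha : 0 ≤ a) (hr : 0 ≤ r)
    (hrp : r ≤ p) : t ^ r * (g (x t) - g xstar) ≤ tikhonovLyapunov g x x' xstar α q a p r t := by
  have hcross := mul_inner_le_of_pos (-(r * t ^ (r - 1))) (Real.rpow_pos_of_pos ht r)
    (x t - xstar) (x' t)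
  have hcoeff : (-(r * t ^ (r - 1))) ^ 2 / (2 * t ^ r) = r ^ 2 / 2 * t ^ (r - 2) := by
    simp only [Real.rpow_sub ht, Real.rpow_one, Real.rpow_ofNat]
    field_simp
  rw [hcoeff] at hcross
  have hx : 0 ≤ a / 2 * t ^ (r - p) * ‖x t‖ ^ 2 := by positivity
  have hu : 0 ≤ α * r / 2 * t ^ (r - q - 1) * ‖x t - xstar‖ ^ 2 := by positivity
  have hstar : 0 ≤ a * r * ‖xstar‖ ^ 2 / (2 * (p - r)) * t ^ (r - p) := by
    have : 0 ≤ p - r := sub_nonneg.mpr hrp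
    positivity
  unfold tikhonovLyapunov
  linear_combination hcross + hx + hu + hstar

theorem tikhonovLyapunovDeriv_nonpos [CompleteSpace H] (hconv : ConvexOn ℝ univ g) {t : ℝ}
    (hgrad : HasGradientAt g (g' (x t)) (x t)) (ht : 0 < t) (hα : 0 < α) (ha : 0 ≤ a)
    (hp : 0 ≤ p) (hr : 0 ≤ r) (hr2 : r ≤ 2) (hrq : r ≤ q + 1) (hvel : 3 * r ≤ α * t ^ (1 - q))
    (hpos : (r * (2 * r - 1)) ^ 2 / α * t ^ (p + q - 3) ≤ a * r) :
    tikhonovLyapunovDeriv g g' x x' xstar α q a p r t ≤ 0 := by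
  have hcross : r * (2 * r - 1) * t ^ (r - 2) * ⟪x t - xstar, x' t⟫_ℝ
      ≤ α * t ^ (r - q) / 2 * ‖x' t‖ ^ 2 + a * r / 2 * t ^ (r - p - 1) * ‖x t - xstar‖ ^ 2 := by
    refine (mul_inner_le_of_pos _ (s := α * t ^ (r - q)) (by positivity) _ _).trans ?_
    gcongr
    calc (r * (2 * r - 1) * t ^ (r - 2)) ^ 2 / (2 * (α * t ^ (r - q)))
        = (r * (2 * r - 1)) ^ 2 / α * t ^ (p + q - 3) * t ^ (r - p - 1) / 2 := by
          simp only [Real.rpow_sub ht, Real.rpow_add ht, Real.rpow_one, Real.rpow_ofNat]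
          field_simp
      _ ≤ a * r * t ^ (r - p - 1) / 2 := by gcongr
      _ = a * r / 2 * t ^ (r - p - 1) := by ring
  have hvel' : 3 * r / 2 * t ^ (r - 1) ≤ α / 2 * t ^ (r - q) := by
    have hsplit : t ^ (r - q) = t ^ (1 - q) * t ^ (r - 1) := by
      rw [← Real.rpow_add ht]
      ring_nf
    rw [hsplit]
    linarith [mul_le_mul_of_nonneg_right hvel (Real.rpow_nonneg ht.le (r - 1))]
  have hgap : g (x t) - g xstar - ⟪g' (x t), x t - xstar⟫_ℝ ≤ 0 := by
    have := hconv.inner_le_sub_of_hasGradientAt hgrad xstar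
    rw [← neg_sub, inner_neg_right] at this
    linarith
  have hgap_term : r * t ^ (r - 1) * (g (x t) - g xstar - ⟪g' (x t), x t - xstar⟫_ℝ) ≤ 0 :=
    mul_nonpos_of_nonneg_of_nonpos (by positivity) hgap
  have hx_term : 0 ≤ a * p / 2 * t ^ (r - p - 1) * ‖x t‖ ^ 2 := by positivity
  have hu_term₁ : r ^ 2 * (r - 2) / 2 * t ^ (r - 3) * ‖x t - xstar‖ ^ 2 ≤ 0 := by
    have : r ^ 2 * (r - 2) / 2 ≤ 0 :=
      div_nonpos_of_nonpos_of_nonneg (mul_nonpos_of_nonneg_of_nonpos (sq_nonneg r) (by linarith))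
        zero_le_two
    exact mul_nonpos_of_nonpos_of_nonneg (mul_nonpos_of_nonpos_of_nonneg this (by positivity))
      (by positivity)
  have hu_term₂ : 0 ≤ α * r * (q + 1 - r) / 2 * t ^ (r - q - 2) * ‖x t - xstar‖ ^ 2 := by
    have : 0 ≤ q + 1 - r := by linarith
    positivity
  have hv_sq : 0 ≤ ‖x' t‖ ^ 2 := sq_nonneg _
  unfold tikhonovLyapunovDeriv
  linear_combination hgap_term + hx_term + hu_term₁ + hu_term₂ + hcross
    + (α / 2 * t ^ (r - q) - 3 * r / 2 * t ^ (r - 1)) * hv_sq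
end

theorem eventually_tikhonov_coeff_bounds {α q a p r : ℝ} (hα : 0 < α) (ha : 0 < a) (hr : 0 < r)
    (hq : q < 1) (hpq : p + q < 3) :
    ∀ᶠ t : ℝ in atTop,
      3 * r ≤ α * t ^ (1 - q) ∧ (r * (2 * r - 1)) ^ 2 / α * t ^ (p + q - 3) ≤ a * r := by
  have hvel : Tendsto (fun t : ℝ => α * t ^ (1 - q)) atTop atTop :=
    (tendsto_rpow_atTop (by linarith)).const_mul_atTop hα
  have hdecay : Tendsto (fun t : ℝ => t ^ (-(3 - p - q))) atTop (𝓝 0) :=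
    tendsto_rpow_neg_atTop (by linarith)
  have hpos : Tendsto (fun t : ℝ => (r * (2 * r - 1)) ^ 2 / α * t ^ (p + q - 3)) atTop (𝓝 0) := by
    rw [show p + q - 3 = -(3 - p - q) by ring]
    simpa using hdecay.const_mul ((r * (2 * r - 1)) ^ 2 / α)
  exact (hvel.eventually_ge_atTop _).and (hpos.eventually (ge_mem_nhds (by positivity)))

theorem tikhonov_objective_gap_le_div_rpow
    {H : Type*} [NormedAddCommGroup H] [InnerProductSpace ℝ H] [CompleteSpace H]
    {g : H → ℝ} {g' : H → H} (hconv : ConvexOn ℝ univ g)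
    (hgrad : ∀ y, HasGradientAt g (g' y) y) {t₀ α q a p r : ℝ} (ht₀ : 0 < t₀) (hα : 0 < α)
    (ha : 0 < a) (hq : q < 1) (hpq : p + q < 3) (hr : 0 < r) (hr2 : r ≤ 2) (hrq : r ≤ q + 1)
    (hrp : r < p) {x x' x'' : ℝ → H} (hx : ∀ t ≥ t₀, HasDerivAt x (x' t) t)
    (hx' : ∀ t ≥ t₀, HasDerivAt x' (x'' t) t)
    (hODE : ∀ t ≥ t₀, x'' t + (α / t ^ q) • x' t + g' (x t) + (a / t ^ p) • x t = 0)
    {xstar : H} (hxstar : ∀ y, g xstar ≤ g y) :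
    ∃ C > 0, ∃ t₁ ≥ t₀, ∀ t ≥ t₁, |g (x t) - g xstar| ≤ C / t ^ r := by
  obtain ⟨t₁, ht₁⟩ := eventually_atTop.mp ((eventually_ge_atTop t₀).and
    (eventually_tikhonov_coeff_bounds hα ha hr hq hpq))
  set E := tikhonovLyapunov g x x' xstar α q a p r
  have hE (t) (ht : t₁ ≤ t) :
      HasDerivAt E (tikhonovLyapunovDeriv g g' x x' xstar α q a p r t) t := by
    have ht₀t := (ht₁ t ht).1
    exact hasDerivAt_tikhonovLyapunov (by linarith) hrp.ne' (hgrad _) (hx t ht₀t) (hx' t ht₀t)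
      (hODE t ht₀t)
  have hanti : AntitoneOn E (Ici t₁) := by
    refine antitoneOn_of_hasDerivWithinAt_nonpos (convex_Ici t₁)
      (fun t ht => (hE t ht).continuousAt.continuousWithinAt)
      (fun t ht => (hE t (le_of_lt (by simpa using ht))).hasDerivWithinAt) fun t ht => ?_
    obtain ⟨ht₀t, hvelt, hpost⟩ := ht₁ t (le_of_lt (by simpa using ht))
    exact tikhonovLyapunovDeriv_nonpos hconv (hgrad _) (by linarith) hα ha.le (by linarith)
      hr.le hr2 hrq hvelt hpost
  have hbound (t) (ht : t₁ ≤ t) : t ^ r * (g (x t) - g xstar) ≤ E t₁ :=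
    (mul_sub_le_tikhonovLyapunov (by linarith [(ht₁ t ht).1]) hα.le ha.le hr.le hrp.le).trans
      (hanti self_mem_Ici ht ht)
  have ht₀t₁ : t₀ ≤ t₁ := (ht₁ t₁ le_rfl).1
  have hE₁ : 0 ≤ E t₁ := (mul_nonneg (Real.rpow_nonneg (by linarith) r)
    (sub_nonneg.mpr (hxstar _))).trans (hbound t₁ le_rfl)
  refine ⟨E t₁ + 1, by linarith, t₁, ht₀t₁, fun t ht => ?_⟩
  have htpos : 0 < t := by linarith
  rw [abs_of_nonneg (sub_nonneg.mpr (hxstar _)), le_div_iff₀ (by positivity), mul_comm]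
  linarith [hbound t ht]

theorem stmt15_general
    {H : Type*} [NormedAddCommGroup H] [InnerProductSpace ℝ H] [CompleteSpace H]
    (g : H → ℝ) (g' : H → H)
    (hg_convex : ConvexOn ℝ Set.univ g)
    (hg_grad : ∀ y : H, HasGradientAt g (g' y) y)
    (t₀ α q a p : ℝ) (ht₀ : 0 < t₀) (hα : 0 < α) (hq0 : 0 < q) (ha0 : 0 < a)
    (x x' x'' : ℝ → H)
    (hx : ∀ t ≥ t₀, HasDerivAt x (x' t) t)
    (hx' : ∀ t ≥ t₀, HasDerivAt x' (x'' t) t)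
    (hODE : ∀ t ≥ t₀, x'' t + (α / t ^ q) • x' t + g' (x t) + (a / t ^ p) • x t = 0)
    (xstar : H) (hxstar : ∀ y : H, g xstar ≤ g y)
    (hq1 : q < 1) (hp1 : (4 * q + 2) / 3 < p) (hp2 : p < q + 1) :
    (∃ C > (0:ℝ), ∃ t₁ ≥ t₀, ∀ t ≥ t₁, |g (x t) - g xstar| ≤ C / t ^ (4 * q - 2 * p + 2)) :=
  tikhonov_objective_gap_le_div_rpow hg_convex hg_grad ht₀ hα ha0 hq1 (by linarith) (by linarith)
    (by linarith) (by linarith) (by linarith) hx hx' hODE hxstar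

theorem stmt15
    {H : Type*} [NormedAddCommGroup H] [InnerProductSpace ℝ H] [CompleteSpace H]
    (g : H → ℝ) (g' : H → H)
    (hg_convex : ConvexOn ℝ Set.univ g)
    (hg_grad : ∀ y : H, HasGradientAt g (g' y) y)
    (hg_lip : ∀ s : Set H, Bornology.IsBounded s → ∃ K : NNReal, LipschitzOnWith K g' s)
    (t₀ α q a p : ℝ) (ht₀ : 0 < t₀) (hα : 0 < α) (hq0 : 0 < q) (ha0 : 0 < a) (hp0 : 0 < p)
    (x x' x'' : ℝ → H)
    (hx : ∀ t ≥ t₀, HasDerivAt x (x' t) t)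
    (hx' : ∀ t ≥ t₀, HasDerivAt x' (x'' t) t)
    (hx''c : ContinuousOn x'' (Set.Ici t₀))
    (hODE : ∀ t ≥ t₀, x'' t + (α / t ^ q) • x' t + g' (x t) + (a / t ^ p) • x t = 0)
    (xstar : H) (hxstar : ∀ y : H, g xstar ≤ g y)
    (hq1 : q < 1) (hp1 : (4 * q + 2) / 3 < p) (hp2 : p < q + 1) :
    (∃ C > (0:ℝ), ∃ t₁ ≥ t₀, ∀ t ≥ t₁, |g (x t) - g xstar| ≤ C / t ^ (4 * q - 2 * p + 2)) :=
  stmt15_general g g' hg_convex hg_grad t₀ α q a p ht₀ hα hq0 ha0 x x' x'' hx hx' hODE xstar hxstar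
    hq1 hp1 hp2
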